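/- arXiv:1602.00255 — 2 statements merged into one kernel-verified Lean document; each statement's English description precedes it below -/
import Mathlib

section
/- Let μ > 0 and ω(ξ) = sqrt(|ξ| * tanh(sqrt(μ)*|ξ|)) for ξ ∈ ℝ^d. Then there are no quadratic resonances: for all ξ₁, ξ₂ ∈ ℝ^d with ξ₁ ≠ 0, ξ₂ ≠ 0, ξ₁ + ξ₂ ≠ 0, and for either choice of sign, (ω(ξ₁) ± ω(ξ₂))² ≠ ω(ξ₁ + ξ₂)². -/
/-!
Write `ω ξ = f |ξ|` with `f r = √(r tanh (√μ r))`. Since `tanh x / x` is strictly decreasing on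
`(0, ∞)` (equivalently, `sinh x / x` is strictly increasing, by convexity of `sinh`), so is
`f r / r`, which makes `f` strictly subadditive; `f` is also monotone. Hence the three lengths
`ω ξ₁, ω ξ₂, ω (ξ₁ + ξ₂)` inherit the triangle inequalities of `|ξ₁|, |ξ₂|, |ξ₁ + ξ₂|`, strictly,
and then `|ω ξ₁ - ω ξ₂| < ω (ξ₁ + ξ₂) < ω ξ₁ + ω ξ₂`.
-/

open Real Set

lemma Real.strictMono_tanh : StrictMono tanh := by
  intro x y hxy
  by_contra! h
  have := artanh_le_artanh (neg_one_lt_tanh y) (tanh_lt_one x) h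
  rw [artanh_tanh, artanh_tanh] at this
  linarith

lemma Real.tanh_nonneg {x : ℝ} (hx : 0 ≤ x) : 0 ≤ tanh x := by
  simpa using strictMono_tanh.monotone hx

lemma Real.strictConvexOn_sinh : StrictConvexOn ℝ (Ici 0) sinh := by
  refine strictConvexOn_of_deriv2_pos (convex_Ici 0) continuous_sinh.continuousOn fun x hx => ?_
  rw [interior_Ici] at hx
  simpa [deriv_sinh, deriv_cosh] using hx

lemma Real.strictMonoOn_sinh_div_self : StrictMonoOn (fun x => sinh x / x) (Ioi 0) :=
  fun u hu v hv huv => by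
    simpa using strictConvexOn_sinh.secant_strict_mono (mem_Ici.2 le_rfl) (mem_Ici.2 hu.le)
      (mem_Ici.2 hv.le) hu.ne' hv.ne' huv

lemma Real.strictAntiOn_tanh_div_self : StrictAntiOn (fun x => tanh x / x) (Ioi 0) := by
  intro x (hx : 0 < x) y (hy : 0 < y) hxy
  -- `2 sinh a cosh b = sinh (a + b) + sinh (a - b)` turns the claim into `sinh u / u < sinh v / v`
  -- for `u = y - x < v = x + y`.
  have key := strictMonoOn_sinh_div_self (sub_pos.2 hxy) (add_pos hx hy)
    (by linarith : y - x < x + y)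
  simp only at key ⊢
  rw [div_lt_div_iff₀ (sub_pos.2 hxy) (by linarith), sinh_add, sinh_sub] at key
  rw [tanh_eq_sinh_div_cosh, tanh_eq_sinh_div_cosh, div_div, div_div,
    div_lt_div_iff₀ (mul_pos (cosh_pos y) hy) (mul_pos (cosh_pos x) hx)]
  nlinarith [cosh_pos x, cosh_pos y]

lemma map_add_lt_add_of_strictAntiOn_div {f : ℝ → ℝ}
    (hf : StrictAntiOn (fun r => f r / r) (Ioi 0)) {p q : ℝ} (hp : 0 < p) (hq : 0 < q) :
    f (p + q) < f p + f q := by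
  have hpq : 0 < p + q := add_pos hp hq
  have hp' : f (p + q) / (p + q) < f p / p := hf hp hpq (lt_add_of_pos_right p hq)
  have hq' : f (p + q) / (p + q) < f q / q := hf hq hpq (lt_add_of_pos_left q hp)
  calc f (p + q) = p * (f (p + q) / (p + q)) + q * (f (p + q) / (p + q)) := by
        field_simp
    _ < p * (f p / p) + q * (f q / q) := by gcongr
    _ = f p + f q := by field_simp

noncomputable def dispersion (s r : ℝ) : ℝ := √(r * tanh (s * r))

lemma dispersion_monotoneOn {s : ℝ} (hs : 0 ≤ s) : MonotoneOn (dispersion s) (Ici 0) := by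
  intro a (ha : 0 ≤ a) b _ hab
  unfold dispersion
  gcongr
  · exact tanh_nonneg (mul_nonneg hs ha)
  · exact strictMono_tanh.monotone (by gcongr)

lemma strictAntiOn_dispersion_div {s : ℝ} (hs : 0 < s) :
    StrictAntiOn (fun r => dispersion s r / r) (Ioi 0) := by
  have hdiv_eq : ∀ r > 0, dispersion s r / r = √(s * (tanh (s * r) / (s * r))) := by
    intro r hr
    rw [dispersion, show s * (tanh (s * r) / (s * r)) = r * tanh (s * r) / r ^ 2 by field_simp,
      sqrt_div' _ (sq_nonneg r), sqrt_sq hr.le]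
  intro p (hp : 0 < p) q (hq : 0 < q) hpq
  simp only [hdiv_eq p hp, hdiv_eq q hq]
  have hq_nonneg : 0 ≤ tanh (s * q) / (s * q) :=
    div_nonneg (tanh_nonneg (by positivity)) (by positivity)
  refine sqrt_lt_sqrt (mul_nonneg hs.le hq_nonneg) (mul_lt_mul_of_pos_left ?_ hs)
  exact strictAntiOn_tanh_div_self (mul_pos hs hp) (mul_pos hs hq) (by gcongr)

lemma dispersion_lt_add {s a b c : ℝ} (hs : 0 < s) (ha : 0 < a) (hb : 0 < b) (hc : 0 ≤ c)
    (hcab : c ≤ a + b) : dispersion s c < dispersion s a + dispersion s b :=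
  (dispersion_monotoneOn hs.le hc (add_pos ha hb).le hcab).trans_lt
    (map_add_lt_add_of_strictAntiOn_div (strictAntiOn_dispersion_div hs) ha hb)

lemma add_sq_ne_and_sub_sq_ne_of_lt_add {A B C : ℝ} (hAB : C < A + B)
    (hBC : A < B + C) (hAC : B < A + C) : (A + B) ^ 2 ≠ C ^ 2 ∧ (A - B) ^ 2 ≠ C ^ 2 :=
  ⟨(sq_lt_sq' (by linarith) hAB).ne', (sq_lt_sq' (by linarith) (by linarith)).ne⟩

theorem stmt4_general (d : ℕ) (μ : ℝ) (hμ : 0 < μ)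
    (ω : EuclideanSpace ℝ (Fin d) → ℝ)
    (hω : ∀ ξ, ω ξ = Real.sqrt (‖ξ‖ * Real.tanh (Real.sqrt μ * ‖ξ‖)))
    (ξ₁ ξ₂ : EuclideanSpace ℝ (Fin d)) (h₁ : ξ₁ ≠ 0) (h₂ : ξ₂ ≠ 0)
    (h₁₂ : ξ₁ + ξ₂ ≠ 0) :
    (ω ξ₁ + ω ξ₂) ^ 2 ≠ ω (ξ₁ + ξ₂) ^ 2 ∧
      (ω ξ₁ - ω ξ₂) ^ 2 ≠ ω (ξ₁ + ξ₂) ^ 2 := by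
  have hs : 0 < √μ := sqrt_pos.2 hμ
  have ha := norm_pos_iff.2 h₁
  have hb := norm_pos_iff.2 h₂
  have hc := norm_pos_iff.2 h₁₂
  simp only [hω]
  refine add_sq_ne_and_sub_sq_ne_of_lt_add ?_ ?_ ?_
  · exact dispersion_lt_add hs ha hb hc.le (norm_add_le ξ₁ ξ₂)
  · exact dispersion_lt_add hs hb hc ha.le ((norm_le_add_norm_add ξ₁ ξ₂).trans_eq (add_comm ..))
  · refine dispersion_lt_add hs ha hc hb.le ?_
    simpa only [add_comm] using norm_le_add_norm_add ξ₂ ξ₁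

/-- No quadratic resonances for the finite-depth gravity water-wave dispersion
function `ω(ξ) = √(|ξ| tanh(√μ |ξ|))`: for either choice of sign,
`(ω(ξ₁) ± ω(ξ₂))² ≠ ω(ξ₁+ξ₂)²`. -/
theorem stmt4 (d : ℕ) (hd : 1 ≤ d) (μ : ℝ) (hμ : 0 < μ)
    (ω : EuclideanSpace ℝ (Fin d) → ℝ)
    (hω : ∀ ξ, ω ξ = Real.sqrt (‖ξ‖ * Real.tanh (Real.sqrt μ * ‖ξ‖)))
    (ξ₁ ξ₂ : EuclideanSpace ℝ (Fin d)) (h₁ : ξ₁ ≠ 0) (h₂ : ξ₂ ≠ 0)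
    (h₁₂ : ξ₁ + ξ₂ ≠ 0) :
    (ω ξ₁ + ω ξ₂) ^ 2 ≠ ω (ξ₁ + ξ₂) ^ 2 ∧
      (ω ξ₁ - ω ξ₂) ^ 2 ≠ ω (ξ₁ + ξ₂) ^ 2 :=
  stmt4_general d μ hμ ω hω ξ₁ ξ₂ h₁ h₂ h₁₂
end

section
/- Fix x > 0 and let g(y) = sqrt(y * tanh y). The function φ(λ) = (g(x*(1+λ)) − g(x*λ))/sqrt(x) − sqrt(tanh x) defined for λ ≥ 0 satisfies φ(0) = 0 and φ'(λ) = sqrt(x) * (g'(x*(1+λ)) − g'(x*λ)) < 0 for all λ > 0; consequently φ(λ) < 0 for all λ > 0. -/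
/-!
With `h y = y tanh y` we have `g = √h`, so `g' = h' / (2 √h)` is strictly decreasing as soon as
`2 h h'' < h'²`. Here `h' = tanh y + y sech² y` and `h'' = 2 sech² y (1 - y tanh y)`, and for
`y > 0` the inequality follows from AM-GM, `h'² ≥ 4 y tanh y sech² y`, since `0 < y tanh y`.
Then `φ(0) = g(x)/√x - √(tanh x) = 0`, and `φ' = √x (g'(x(1+λ)) - g'(xλ)) < 0` on `λ > 0`
makes `φ` strictly decreasing on `[0, ∞)`.
-/

open Real Set

namespace Real

theorem hasDerivAt_tanh (y : ℝ) : HasDerivAt tanh (1 - tanh y ^ 2) y := by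
  have h := (hasDerivAt_sinh y).div (hasDerivAt_cosh y) (cosh_pos y).ne'
  rw [show sinh / cosh = tanh from funext fun z => (tanh_eq_sinh_div_cosh z).symm] at h
  refine h.congr_deriv ?_
  rw [tanh_eq_sinh_div_cosh]
  field_simp

@[fun_prop]
theorem continuous_tanh : Continuous tanh :=
  continuous_iff_continuousAt.2 fun y => (hasDerivAt_tanh y).continuousAt

theorem tanh_pos {y : ℝ} (hy : 0 < y) : 0 < tanh y := by
  rw [tanh_eq_sinh_div_cosh]
  exact div_pos (sinh_pos_iff.2 hy) (cosh_pos y)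

end Real

/-- `f' / (2 √f)` is the derivative of `√f`, and its own derivative is
`(2 f f'' - f'²) / (4 f √f)`. -/
theorem strictAntiOn_div_two_mul_sqrt {s : Set ℝ} (hs : Convex ℝ s) (hso : IsOpen s)
    {f f' f'' : ℝ → ℝ} (hf : ∀ y ∈ s, HasDerivAt f (f' y) y)
    (hf' : ∀ y ∈ s, HasDerivAt f' (f'' y) y) (hpos : ∀ y ∈ s, 0 < f y)
    (hsq : ∀ y ∈ s, 2 * f y * f'' y < f' y ^ 2) :
    StrictAntiOn (fun y => f' y / (2 * √(f y))) s := by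
  have hderiv : ∀ y ∈ s, HasDerivAt (fun y => f' y / (2 * √(f y)))
      ((f'' y * (2 * √(f y)) - f' y * (2 * (f' y / (2 * √(f y))))) / (2 * √(f y)) ^ 2) y :=
    fun y hy => (hf' y hy).div (((hf y hy).sqrt (hpos y hy).ne').const_mul 2)
      (by have := sqrt_pos.2 (hpos y hy); positivity)
  refine strictAntiOn_of_hasDerivWithinAt_neg hs
    (fun y hy => (hderiv y hy).continuousAt.continuousWithinAt)
    (fun y hy => (hderiv y (interior_subset hy)).hasDerivWithinAt) fun y hy => ?_
  rw [hso.interior_eq] at hy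
  have hr := sqrt_pos.2 (hpos y hy)
  have hnum : (f'' y * (2 * √(f y)) - f' y * (2 * (f' y / (2 * √(f y))))) * √(f y) =
      2 * f y * f'' y - f' y ^ 2 := by
    field_simp
    rw [sq_sqrt (hpos y hy).le]
  apply div_neg_of_neg_of_pos _ (by positivity)
  rw [← mul_lt_mul_iff_of_pos_right hr, zero_mul, hnum]
  linarith [hsq y hy]

theorem hasDerivAt_mul_tanh (y : ℝ) :
    HasDerivAt (fun z => z * tanh z) (tanh y + y * (1 - tanh y ^ 2)) y :=
  ((hasDerivAt_id y).mul (hasDerivAt_tanh y)).congr_deriv (by simp)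

theorem hasDerivAt_tanh_add_mul_one_sub_tanh_sq (y : ℝ) :
    HasDerivAt (fun z => tanh z + z * (1 - tanh z ^ 2))
      (2 * (1 - tanh y ^ 2) * (1 - y * tanh y)) y := by
  have h := (hasDerivAt_tanh y).add
    ((hasDerivAt_id y).mul (((hasDerivAt_tanh y).pow 2).const_sub 1))
  refine h.congr_deriv ?_
  simp only [id, Pi.pow_apply, Nat.cast_ofNat]
  ring

/-- AM-GM: `(tanh y + y sech² y)² ≥ 4 y tanh y sech² y`, and `1 - y tanh y < 1`. -/
theorem two_mul_mul_tanh_mul_lt_sq {y : ℝ} (hy : 0 < y) :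
    2 * (y * tanh y) * (2 * (1 - tanh y ^ 2) * (1 - y * tanh y)) <
      (tanh y + y * (1 - tanh y ^ 2)) ^ 2 := by
  have ht := tanh_pos hy
  have hs : 0 < 1 - tanh y ^ 2 := sub_pos.2 (tanh_sq_lt_one y)
  nlinarith [sq_nonneg (tanh y - y * (1 - tanh y ^ 2)),
    mul_pos (mul_pos (mul_pos hy hy) (mul_pos ht ht)) hs]

theorem strictAntiOn_deriv_sqrt_mul_tanh :
    StrictAntiOn (fun y => (tanh y + y * (1 - tanh y ^ 2)) / (2 * √(y * tanh y))) (Ioi 0) :=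
  strictAntiOn_div_two_mul_sqrt (convex_Ioi 0) isOpen_Ioi (fun y _ => hasDerivAt_mul_tanh y)
    (fun y _ => hasDerivAt_tanh_add_mul_one_sub_tanh_sq y)
    (fun _ hy => mul_pos hy (tanh_pos hy)) (fun _ hy => two_mul_mul_tanh_mul_lt_sq hy)

theorem hasDerivAt_sub_comp_mul_div_sqrt {g g' : ℝ → ℝ} {x l : ℝ} (c : ℝ) (hx : 0 < x)
    (h₁ : HasDerivAt g (g' (x * (1 + l))) (x * (1 + l)))
    (h₂ : HasDerivAt g (g' (x * l)) (x * l)) :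
    HasDerivAt (fun l => (g (x * (1 + l)) - g (x * l)) / √x - c)
      (√x * (g' (x * (1 + l)) - g' (x * l))) l := by
  have hshift : HasDerivAt (fun l : ℝ => x * (1 + l)) x l := by
    simpa using ((hasDerivAt_id l).const_add 1).const_mul x
  have hscale : HasDerivAt (fun l : ℝ => x * l) x l := by
    simpa using (hasDerivAt_id l).const_mul x
  have hsx := sqrt_pos.2 hx
  refine (((h₁.comp l hshift).sub (h₂.comp l hscale)).div_const √x).sub_const c
    |>.congr_deriv ?_
  field_simp
  rw [sq_sqrt hx.le]
  ring

theorem sqrt_mul_sub_comp_mul_neg {g' : ℝ → ℝ} (hg' : StrictAntiOn g' (Ioi 0)) {x l : ℝ}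
    (hx : 0 < x) (hl : 0 < l) : √x * (g' (x * (1 + l)) - g' (x * l)) < 0 := by
  have := hg' (mem_Ioi.2 (by positivity : 0 < x * l)) (mem_Ioi.2 (by positivity))
    (by nlinarith : x * l < x * (1 + l))
  exact mul_neg_of_pos_of_neg (sqrt_pos.2 hx) (by linarith)

/-- For fixed `x > 0` and `g(y) = √(y tanh y)`, the function
`φ(λ) = (g(x(1+λ)) - g(xλ))/√x - √(tanh x)` satisfies `φ(0) = 0`,
`φ'(λ) = √x (g'(x(1+λ)) - g'(xλ)) < 0` for `λ > 0`, and hence `φ(λ) < 0` for `λ > 0`. -/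
theorem stmt7 (x : ℝ) (hx : 0 < x) (g g' φ : ℝ → ℝ)
    (hg : ∀ y, g y = Real.sqrt (y * Real.tanh y))
    (hg' : ∀ y, g' y =
      (Real.tanh y + y * (1 - Real.tanh y ^ 2)) / (2 * Real.sqrt (y * Real.tanh y)))
    (hφ : ∀ l, φ l = (g (x * (1 + l)) - g (x * l)) / Real.sqrt x - Real.sqrt (Real.tanh x)) :
    φ 0 = 0 ∧ ∀ l, 0 < l →
      HasDerivAt φ (Real.sqrt x * (g' (x * (1 + l)) - g' (x * l))) l ∧
      Real.sqrt x * (g' (x * (1 + l)) - g' (x * l)) < 0 ∧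
      φ l < 0 := by
  have hg_eq : g = fun y => √(y * tanh y) := funext hg
  have hφ_eq := funext hφ
  have hg_deriv (u : ℝ) (hu : 0 < u) : HasDerivAt g (g' u) u := by
    rw [hg_eq, hg' u]
    exact (hasDerivAt_mul_tanh u).sqrt (mul_pos hu (tanh_pos hu)).ne'
  have hg'_anti : StrictAntiOn g' (Ioi 0) := funext hg' ▸ strictAntiOn_deriv_sqrt_mul_tanh
  have hφ_deriv (l : ℝ) (hl : 0 < l) :
      HasDerivAt φ (√x * (g' (x * (1 + l)) - g' (x * l))) l :=
    hφ_eq ▸ hasDerivAt_sub_comp_mul_div_sqrt _ hx (hg_deriv _ (by positivity))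
      (hg_deriv _ (by positivity))
  have hφ_deriv_neg (l : ℝ) (hl : 0 < l) : √x * (g' (x * (1 + l)) - g' (x * l)) < 0 :=
    sqrt_mul_sub_comp_mul_neg hg'_anti hx hl
  have hφ_zero : φ 0 = 0 := by
    rw [hφ, hg, hg]
    simp only [add_zero, mul_one, mul_zero, zero_mul, sqrt_zero, sub_zero]
    rw [sqrt_mul hx.le, mul_div_cancel_left₀ _ (sqrt_pos.2 hx).ne', sub_self]
  have hφ_cont : Continuous φ := by
    rw [hφ_eq, hg_eq]
    fun_prop
  have hφ_anti : StrictAntiOn φ (Ici 0) :=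
    strictAntiOn_of_hasDerivWithinAt_neg (convex_Ici 0) hφ_cont.continuousOn
      (fun l hl => (hφ_deriv l (by simpa using hl)).hasDerivWithinAt)
      (fun l hl => hφ_deriv_neg l (by simpa using hl))
  refine ⟨hφ_zero, fun l hl => ⟨hφ_deriv l hl, hφ_deriv_neg l hl, ?_⟩⟩
  simpa [hφ_zero] using hφ_anti self_mem_Ici (mem_Ici.2 hl.le) hl
end
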